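/- arXiv:1501.04080 — 4 statements merged into one kernel-verified Lean document; each statement's English description precedes it below -/
import Mathlib

section
/- Let Λ be a finite set and q, q' : Λ → ℝ with sup_{λ}|q(λ) - q'(λ)| ≤ Δ. Let P (resp. P') be the distribution on Λ with P(λ) ∝ exp(ε·q(λ)/(2Δ)) (resp. with q'). Then for all λ ∈ Λ, P(λ) ≤ e^ε · P'(λ). -/
open Finset Real

theorem sum_exp_le_exp_mul_sum_exp {ι : Type*} (s : Finset ι) {f g : ι → ℝ} {c : ℝ}
    (hfg : ∀ m, f m ≤ g m + c) :
    ∑ m ∈ s, exp (f m) ≤ exp c * ∑ m ∈ s, exp (g m) := by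
  rw [mul_sum]
  gcongr with m
  rw [← exp_add, add_comm]
  exact exp_le_exp.mpr (hfg m)

theorem exp_div_sum_exp_le_exp_mul {ι : Type*} [Fintype ι] {f g : ι → ℝ} {c : ℝ}
    (hfg : ∀ m, |f m - g m| ≤ c) (l : ι) :
    exp (f l) / ∑ m, exp (f m) ≤ exp (2 * c) * (exp (g l) / ∑ m, exp (g m)) := by
  have hSf : 0 < ∑ m, exp (f m) := sum_pos (fun m _ ↦ exp_pos _) ⟨l, mem_univ l⟩
  have hSg : 0 < ∑ m, exp (g m) := sum_pos (fun m _ ↦ exp_pos _) ⟨l, mem_univ l⟩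
  have hnum : exp (f l) ≤ exp c * exp (g l) := by
    simpa using sum_exp_le_exp_mul_sum_exp {l} (fun m ↦ by linarith [(abs_le.mp (hfg m)).2])
  have hden : ∑ m, exp (g m) ≤ exp c * ∑ m, exp (f m) :=
    sum_exp_le_exp_mul_sum_exp univ (fun m ↦ by linarith [(abs_le.mp (hfg m)).1])
  rw [← mul_div_assoc, div_le_div_iff₀ hSf hSg]
  calc exp (f l) * ∑ m, exp (g m)
      ≤ (exp c * exp (g l)) * (exp c * ∑ m, exp (f m)) :=
        mul_le_mul hnum hden hSg.le (by positivity)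
    _ = exp (2 * c) * exp (g l) * ∑ m, exp (f m) := by rw [two_mul, exp_add]; ring

theorem exponential_mechanism_dp_general {Λ : Type*} [Fintype Λ]
    (q q' : Λ → ℝ) (ε Δ : ℝ) (hε : 0 < ε) (hΔ : 0 < Δ)
    (hsens : ∀ l : Λ, |q l - q' l| ≤ Δ) (l : Λ) :
    Real.exp (ε * q l / (2 * Δ)) / (∑ m : Λ, Real.exp (ε * q m / (2 * Δ)))
      ≤ Real.exp ε *
        (Real.exp (ε * q' l / (2 * Δ)) / (∑ m : Λ, Real.exp (ε * q' m / (2 * Δ)))) := by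
  have hscore : ∀ m, |ε * q m / (2 * Δ) - ε * q' m / (2 * Δ)| ≤ ε / 2 := fun m ↦ by
    rw [← sub_div, ← mul_sub, abs_div, abs_mul, abs_of_pos hε,
      abs_of_pos (by positivity : (0 : ℝ) < 2 * Δ), div_le_iff₀ (by positivity)]
    nlinarith [hsens m]
  simpa only [mul_div_cancel₀ ε two_ne_zero] using exp_div_sum_exp_le_exp_mul hscore l

/-- The exponential mechanism is `ε`-differentially private: if the score functions
`q, q'` (from neighboring datasets) differ pointwise by at most `Δ`, then for every
output `l`, the probability of outputting `l` under `q` is at most `e^ε` times the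
probability under `q'`. -/
theorem exponential_mechanism_dp {Λ : Type*} [Fintype Λ] [Nonempty Λ]
    (q q' : Λ → ℝ) (ε Δ : ℝ) (hε : 0 < ε) (hΔ : 0 < Δ)
    (hsens : ∀ l : Λ, |q l - q' l| ≤ Δ) (l : Λ) :
    Real.exp (ε * q l / (2 * Δ)) / (∑ m : Λ, Real.exp (ε * q m / (2 * Δ)))
      ≤ Real.exp ε *
        (Real.exp (ε * q' l / (2 * Δ)) / (∑ m : Λ, Real.exp (ε * q' m / (2 * Δ)))) :=
  exponential_mechanism_dp_general q q' ε Δ hε hΔ hsens l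
end

section
/- Let Λ be a finite set, q : Λ → ℝ, Δ > 0, ε > 0, and let λ̃ be drawn from the distribution P(λ) ∝ exp(ε·q(λ)/(2Δ)). Then for any a > 0, with probability at least 1 - e^{-a}, q(λ̃) ≥ max_{λ ∈ Λ} q(λ) - (2Δ/ε)·(log|Λ| + a). -/
/-!
Put `β = ε/(2Δ)`, and write `M` for the maximal score and `N` for the number of candidates. Every
candidate whose score falls below `M - (log N + a)/β` has weight at most `exp (β M) e^{-a} / N`, so
these at most `N` candidates together weigh at most `e^{-a} exp (β M)`, which is at most `e^{-a}`
times the partition function because the maximiser alone contributes `exp (β M)` to it.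
-/

open Finset Real

namespace Finset

variable {ι : Type*} (s : Finset ι) (q : ι → ℝ) {β : ℝ}

theorem exp_mul_sup'_le_sum_exp_mul (hs : s.Nonempty) :
    exp (β * s.sup' hs q) ≤ ∑ i ∈ s, exp (β * q i) := by
  obtain ⟨i, hi, hmax⟩ := s.exists_mem_eq_sup' hs q
  rw [hmax]
  exact single_le_sum (f := fun i => exp (β * q i)) (fun _ _ => (exp_pos _).le) hi

theorem sum_filter_lt_exp_mul_le (hβ : 0 ≤ β) (c : ℝ) :
    ∑ i ∈ s with q i < c, exp (β * q i) ≤ #s * exp (β * c) := by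
  calc ∑ i ∈ s with q i < c, exp (β * q i)
      ≤ #{i ∈ s | q i < c} • exp (β * c) :=
        sum_le_card_nsmul _ _ _ fun i hi =>
          exp_le_exp.mpr (mul_le_mul_of_nonneg_left (mem_filter.mp hi).2.le hβ)
    _ ≤ #s * exp (β * c) := by
        rw [nsmul_eq_mul]
        exact mul_le_mul_of_nonneg_right (mod_cast card_filter_le s _) (exp_pos _).le

theorem sum_filter_lt_sup'_sub_exp_mul_le (hs : s.Nonempty) (hβ : 0 < β) (a : ℝ) :
    ∑ i ∈ s with q i < s.sup' hs q - (log #s + a) / β, exp (β * q i)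
      ≤ exp (-a) * ∑ i ∈ s, exp (β * q i) := by
  set M := s.sup' hs q
  have hcard : (0 : ℝ) < #s := by exact_mod_cast hs.card_pos
  have hthreshold : #s * exp (β * (M - (log #s + a) / β)) = exp (-a) * exp (β * M) := by
    rw [mul_sub, mul_div_cancel₀ _ hβ.ne', sub_add_eq_sub_sub, exp_sub, exp_sub, exp_log hcard,
      exp_neg]
    field_simp
  calc ∑ i ∈ s with q i < M - (log #s + a) / β, exp (β * q i)
      ≤ #s * exp (β * (M - (log #s + a) / β)) := sum_filter_lt_exp_mul_le s q hβ.le _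
    _ = exp (-a) * exp (β * M) := hthreshold
    _ ≤ exp (-a) * ∑ i ∈ s, exp (β * q i) := by
        gcongr
        exact exp_mul_sup'_le_sum_exp_mul s q hs

theorem one_sub_exp_neg_le_sum_filter_gibbs (hs : s.Nonempty) (hβ : 0 < β) (a : ℝ) :
    1 - exp (-a) ≤
      ∑ i ∈ s with s.sup' hs q - (log #s + a) / β ≤ q i,
        exp (β * q i) / ∑ j ∈ s, exp (β * q j) := by
  set c := s.sup' hs q - (log #s + a) / β
  have hZ : 0 < ∑ j ∈ s, exp (β * q j) := sum_pos (fun _ _ => exp_pos _) hs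
  have hsplit := sum_filter_add_sum_filter_not s (fun i => c ≤ q i) fun i => exp (β * q i)
  have hbad := sum_filter_lt_sup'_sub_exp_mul_le s q hs hβ a
  simp_rw [not_le] at hsplit
  rw [← sum_div, le_div_iff₀ hZ]
  linarith

end Finset

theorem exponential_mechanism_utility_general {Λ : Type*} [Fintype Λ] [Nonempty Λ]
    (q : Λ → ℝ) (ε Δ a : ℝ) (hε : 0 < ε) (hΔ : 0 < Δ) :
    1 - Real.exp (-a) ≤
      ∑ l ∈ Finset.univ.filter (fun l : Λ =>
          Finset.univ.sup' Finset.univ_nonempty q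
            - 2 * Δ / ε * (Real.log (Fintype.card Λ) + a) ≤ q l),
        Real.exp (ε * q l / (2 * Δ)) / (∑ m : Λ, Real.exp (ε * q m / (2 * Δ))) := by
  have hβ : 0 < ε / (2 * Δ) := by positivity
  have hscale : 2 * Δ / ε * (log (Fintype.card Λ) + a)
      = (log #(univ : Finset Λ) + a) / (ε / (2 * Δ)) := by
    rw [card_univ]
    field_simp
  simp_rw [hscale, mul_div_right_comm ε]
  exact one_sub_exp_neg_le_sum_filter_gibbs univ q univ_nonempty hβ a

/-- Exponential mechanism utility: if `λ̃` is drawn with probability proportional to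
`exp (ε q(λ)/(2Δ))`, then with probability at least `1 - e^{-a}`,
`q(λ̃) ≥ max_λ q(λ) - (2Δ/ε)(log |Λ| + a)`. -/
theorem exponential_mechanism_utility {Λ : Type*} [Fintype Λ] [Nonempty Λ]
    (q : Λ → ℝ) (ε Δ a : ℝ) (hε : 0 < ε) (hΔ : 0 < Δ) (ha : 0 < a) :
    1 - Real.exp (-a) ≤
      ∑ l ∈ Finset.univ.filter (fun l : Λ =>
          Finset.univ.sup' Finset.univ_nonempty q
            - 2 * Δ / ε * (Real.log (Fintype.card Λ) + a) ≤ q l),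
        Real.exp (ε * q l / (2 * Δ)) / (∑ m : Λ, Real.exp (ε * q m / (2 * Δ))) :=
  exponential_mechanism_utility_general q ε Δ a hε hΔ
end

section
/- Let ℓᵢ : ℝᵈ → ℝ, i = 1,...,n, be convex differentiable 1-Lipschitz functions and for λ > 0 define O_λ(w) = (λ/2)‖w‖² + (1/n)Σᵢ ℓᵢ(w) with minimizer w_λ. Then for 0 < λ < λ', ‖w_λ - w_{λ'}‖ ≤ (λ' - λ)/(λ·λ'). -/
/-!
For convex `f`, the objective `O_c = c / 2 * ‖·‖ ^ 2 + f` is `c`-strongly convex, so its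
minimizer `u` has quadratic growth: `O_c u + c / 2 * ‖u - v‖ ^ 2 ≤ O_c v`. Comparing with `v = 0`
and using that `f` is `K`-Lipschitz gives `‖u‖ ≤ K / c`. Adding the growth inequalities of the
minimizers `u, u'` of `O_c, O_c'` at each other cancels `f` and leaves
`(c + c') * ‖u - u'‖ ^ 2 ≤ (c' - c) * (‖u‖ ^ 2 - ‖u'‖ ^ 2) ≤ (c' - c) * (K / c + K / c') * ‖u - u'‖`.
-/

open Filter Topology Set

open scoped NNReal

section

variable {E : Type*} [NormedAddCommGroup E]

theorem UniformConvexOn.add_le_of_isMinOn [NormedSpace ℝ E] {s : Set E} {φ : ℝ → ℝ}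
    {g : E → ℝ} {u v : E} (hg : UniformConvexOn s φ g) (hu : IsMinOn g s u) (hus : u ∈ s)
    (hv : v ∈ s) : g u + φ ‖u - v‖ ≤ g v := by
  have hsegment : ∀ t ∈ Ioo (0 : ℝ) 1, g u + (1 - t) * φ ‖u - v‖ ≤ g v := by
    rintro t ⟨ht₀, ht₁⟩
    have hmin := hu (hg.1 hus hv (sub_nonneg.2 ht₁.le) ht₀.le (sub_add_cancel 1 t))
    have hconv := hg.2 hus hv (sub_nonneg.2 ht₁.le) ht₀.le (sub_add_cancel 1 t)
    simp only [mem_ofPred_eq, smul_eq_mul] at hmin hconv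
    nlinarith
  have hcont : Continuous fun t : ℝ ↦ g u + (1 - t) * φ ‖u - v‖ := by fun_prop
  refine le_of_tendsto
    ((hcont.tendsto' 0 _ (by simp)).mono_left (nhdsWithin_le_nhds (s := Ioi 0))) ?_
  exact eventually_of_mem (Ioo_mem_nhdsGT zero_lt_one) hsegment

variable [InnerProductSpace ℝ E] {f : E → ℝ}

theorem ConvexOn.strongConvexOn_sq_norm_add {s : Set E} (hf : ConvexOn ℝ s f) (c : ℝ) :
    StrongConvexOn s c fun v ↦ c / 2 * ‖v‖ ^ 2 + f v :=
  strongConvexOn_iff_convex.2 <| by simpa using hf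

theorem ConvexOn.isMinOn_sq_norm_add_growth (hf : ConvexOn ℝ univ f) {c : ℝ} {u : E}
    (hu : IsMinOn (fun v ↦ c / 2 * ‖v‖ ^ 2 + f v) univ u) (v : E) :
    c / 2 * ‖u‖ ^ 2 + f u + c / 2 * ‖u - v‖ ^ 2 ≤ c / 2 * ‖v‖ ^ 2 + f v :=
  (hf.strongConvexOn_sq_norm_add c).add_le_of_isMinOn hu (mem_univ u) (mem_univ v)

theorem ConvexOn.norm_le_of_isMinOn_sq_norm_add {K : ℝ≥0} (hf : ConvexOn ℝ univ f)
    (hK : LipschitzWith K f) {c : ℝ} (hc : 0 < c) {u : E}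
    (hu : IsMinOn (fun v ↦ c / 2 * ‖v‖ ^ 2 + f v) univ u) : ‖u‖ ≤ K / c := by
  have hgrowth := hf.isMinOn_sq_norm_add_growth hu 0
  have hlip : f 0 - f u ≤ K * ‖u‖ := by
    simpa [dist_eq_norm] using (le_abs_self _).trans (hK.dist_le_mul 0 u)
  simp only [sub_zero, norm_zero] at hgrowth
  rw [le_div_iff₀ hc]
  nlinarith [norm_nonneg u]

theorem ConvexOn.norm_sub_le_of_isMinOn_sq_norm_add {K : ℝ≥0} (hf : ConvexOn ℝ univ f)
    (hK : LipschitzWith K f) {c c' : ℝ} (hc : 0 < c) (hcc' : c ≤ c') {u u' : E}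
    (hu : IsMinOn (fun v ↦ c / 2 * ‖v‖ ^ 2 + f v) univ u)
    (hu' : IsMinOn (fun v ↦ c' / 2 * ‖v‖ ^ 2 + f v) univ u') :
    ‖u - u'‖ ≤ K * (c' - c) / (c * c') := by
  have hc' : 0 < c' := hc.trans_le hcc'
  have h₁ := hf.isMinOn_sq_norm_add_growth hu u'
  have h₂ := hf.isMinOn_sq_norm_add_growth hu' u
  have hb₁ := hf.norm_le_of_isMinOn_sq_norm_add hK hc hu
  have hb₂ := hf.norm_le_of_isMinOn_sq_norm_add hK hc' hu'
  rw [norm_sub_rev u'] at h₂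
  set D := ‖u - u'‖
  have hsq : (c + c') * D ^ 2 ≤ (c' - c) * (‖u‖ + ‖u'‖) * (‖u‖ - ‖u'‖) := by
    linear_combination 2 * h₁ + 2 * h₂
  have hsum : c * c' * (‖u‖ + ‖u'‖) ≤ K * (c + c') := by
    rw [le_div_iff₀ hc] at hb₁
    rw [le_div_iff₀ hc'] at hb₂
    nlinarith
  have hδ : 0 ≤ c' - c := sub_nonneg.2 hcc'
  have hD : 0 ≤ D := norm_nonneg _
  have hsqD : (c + c') * D ^ 2 ≤ (c' - c) * (‖u‖ + ‖u'‖) * D :=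
    hsq.trans (mul_le_mul_of_nonneg_left (norm_sub_norm_le u u') (by positivity))
  have hquad : D * (c * c') * D ≤ K * (c' - c) * D := by
    refine le_of_mul_le_mul_left ?_ (add_pos hc hc')
    calc (c + c') * (D * (c * c') * D) = c * c' * ((c + c') * D ^ 2) := by ring
      _ ≤ c * c' * ((c' - c) * (‖u‖ + ‖u'‖) * D) := by gcongr
      _ = (c' - c) * D * (c * c' * (‖u‖ + ‖u'‖)) := by ring
      _ ≤ (c' - c) * D * (K * (c + c')) := by gcongr
      _ = (c + c') * (K * (c' - c) * D) := by ring
  rw [le_div_iff₀ (by positivity)]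
  rcases hD.eq_or_lt with hD0 | hDpos
  · rw [← hD0, zero_mul]
    positivity
  · exact le_of_mul_le_mul_right hquad hDpos

end

theorem convexOn_sum {ι F : Type*} [AddCommMonoid F] [Module ℝ F] {s : Set F} (hs : Convex ℝ s)
    (t : Finset ι) {f : ι → F → ℝ} (hf : ∀ i ∈ t, ConvexOn ℝ s (f i)) :
    ConvexOn ℝ s fun x ↦ ∑ i ∈ t, f i x := by
  simpa only [Finset.sum_fn] using
    Finset.sum_induction f (ConvexOn ℝ s) (fun _ _ ↦ ConvexOn.add) (convexOn_const 0 hs) hf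

theorem lipschitzWith_average {α : Type*} [PseudoMetricSpace α] {n : ℕ} {f : Fin n → α → ℝ}
    {K : ℝ≥0} (hf : ∀ i, LipschitzWith K (f i)) :
    LipschitzWith K fun x ↦ 1 / (n : ℝ) * ∑ i, f i x := by
  refine LipschitzWith.of_dist_le_mul fun x y ↦ ?_
  rcases n.eq_zero_or_pos with rfl | hn
  · simp only [Finset.univ_eq_empty, Finset.sum_empty, mul_zero, dist_self]
    positivity
  calc dist (1 / (n : ℝ) * ∑ i, f i x) (1 / (n : ℝ) * ∑ i, f i y)
      = 1 / n * |∑ i, (f i x - f i y)| := by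
        rw [Real.dist_eq, ← mul_sub, ← Finset.sum_sub_distrib, abs_mul, abs_of_pos (by positivity)]
    _ ≤ 1 / n * ∑ _i : Fin n, K * dist x y := by
        gcongr
        exact (Finset.abs_sum_le_sum_abs _ _).trans
          (Finset.sum_le_sum fun i _ ↦ Real.dist_eq _ _ ▸ (hf i).dist_le_mul x y)
    _ = K * dist x y := by
        rw [Finset.sum_const, Finset.card_univ, Fintype.card_fin, nsmul_eq_mul]
        field_simp

theorem erm_minimizer_stability_general {d n : ℕ}
    (ℓ : Fin n → EuclideanSpace ℝ (Fin d) → ℝ)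
    (hconv : ∀ i, ConvexOn ℝ Set.univ (ℓ i))
    (hlip : ∀ i, LipschitzWith 1 (ℓ i))
    (lam lam' : ℝ) (hlam : 0 < lam) (hlt : lam < lam')
    (w w' : EuclideanSpace ℝ (Fin d))
    (hw : IsMinOn (fun v => lam / 2 * ‖v‖ ^ 2 + (1 / (n : ℝ)) * ∑ i, ℓ i v) Set.univ w)
    (hw' : IsMinOn (fun v => lam' / 2 * ‖v‖ ^ 2 + (1 / (n : ℝ)) * ∑ i, ℓ i v) Set.univ w') :
    ‖w - w'‖ ≤ (lam' - lam) / (lam * lam') := by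
  have havg_conv : ConvexOn ℝ univ fun v ↦ 1 / (n : ℝ) * ∑ i, ℓ i v :=
    (convexOn_sum convex_univ _ fun i _ ↦ hconv i).smul (by positivity)
  simpa using havg_conv.norm_sub_le_of_isMinOn_sq_norm_add (lipschitzWith_average hlip) hlam
    hlt.le hw hw'

/-- Stability of regularized ERM: if each loss `ℓᵢ` is convex, differentiable and
`1`-Lipschitz, and `w_λ, w_{λ'}` minimize `O_λ(w) = (λ/2)‖w‖² + (1/n) Σᵢ ℓᵢ(w)` and
`O_{λ'}` respectively, then for `0 < λ < λ'`, `‖w_λ - w_{λ'}‖ ≤ (λ' - λ)/(λ λ')`. -/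
theorem erm_minimizer_stability {d n : ℕ} (hn : 0 < n)
    (ℓ : Fin n → EuclideanSpace ℝ (Fin d) → ℝ)
    (hconv : ∀ i, ConvexOn ℝ Set.univ (ℓ i))
    (hdiff : ∀ i, Differentiable ℝ (ℓ i))
    (hlip : ∀ i, LipschitzWith 1 (ℓ i))
    (lam lam' : ℝ) (hlam : 0 < lam) (hlt : lam < lam')
    (w w' : EuclideanSpace ℝ (Fin d))
    (hw : IsMinOn (fun v => lam / 2 * ‖v‖ ^ 2 + (1 / (n : ℝ)) * ∑ i, ℓ i v) Set.univ w)
    (hw' : IsMinOn (fun v => lam' / 2 * ‖v‖ ^ 2 + (1 / (n : ℝ)) * ∑ i, ℓ i v) Set.univ w') :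
    ‖w - w'‖ ≤ (lam' - lam) / (lam * lam') :=
  erm_minimizer_stability_general ℓ hconv hlip lam lam' hlam hlt w w' hw hw'
end

section
/- Under the setting where each regularized ERM objective O_λ(w) = (λ/2)‖w‖² + (1/n)Σᵢ ℓᵢ(w) has minimizer w_λ with 1-Lipschitz convex differentiable losses ℓᵢ, and g(·, x, y) is L-Lipschitz in w for all (x,y), the validation score f_V(w) = -(1/m)Σⱼ g(w, x̄ⱼ, ȳⱼ) satisfies |f_V(w_λ) - f_V(w_{λ'})| ≤ L(λ' - λ)/(λλ') for 0 < λ < λ'. -/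
/-!
Both regularized objectives are strongly convex, so each grows quadratically away from its
minimizer. Adding the two growth inequalities `O_λ(w_λ') - O_λ(w_λ) ≥ λ/2 ‖w_λ - w_λ'‖²` and
`O_λ'(w_λ) - O_λ'(w_λ') ≥ λ'/2 ‖w_λ - w_λ'‖²` cancels the training losses and leaves
`(λ + λ') ‖w_λ - w_λ'‖ ≤ (λ' - λ)(‖w_λ‖ + ‖w_λ'‖)`. Growth of `O_λ` from `w_λ` to `0`, together
with the Lipschitz bound on the training loss, gives `λ ‖w_λ‖ ≤ 1`; hence
`‖w_λ - w_λ'‖ ≤ (λ' - λ)/(λ λ')`, and the validation score is `L`-Lipschitz in `w`.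
-/

open Set Filter Topology Finset

theorem StrongConvexOn.add_le_of_isMinOn {E : Type*} [NormedAddCommGroup E] [NormedSpace ℝ E]
    {s : Set E} {m : ℝ} {f : E → ℝ} {w v : E} (hf : StrongConvexOn s m f) (hw : IsMinOn f s w)
    (hws : w ∈ s) (hv : v ∈ s) :
    f w + m / 2 * ‖v - w‖ ^ 2 ≤ f v := by
  set C := m / 2 * ‖v - w‖ ^ 2
  have hstep : ∀ t ∈ Ioo (0 : ℝ) 1, (1 - t) * C ≤ f v - f w := by
    rintro t ⟨ht₀, ht₁⟩
    have hcomb : f (t • v + (1 - t) • w) ≤ t * f v + (1 - t) * f w - t * (1 - t) * C :=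
      hf.2 hv hws ht₀.le (sub_nonneg.2 ht₁.le) (add_sub_cancel t 1)
    have hmin : f w ≤ f (t • v + (1 - t) • w) :=
      hw (hf.1 hv hws ht₀.le (sub_nonneg.2 ht₁.le) (add_sub_cancel t 1))
    have hscaled : t * ((1 - t) * C) ≤ t * (f v - f w) := by linarith
    exact le_of_mul_le_mul_left hscaled ht₀
  have hlim : Tendsto (fun t : ℝ => (1 - t) * C) (𝓝[>] 0) (𝓝 C) :=
    tendsto_nhdsWithin_of_tendsto_nhds <|
      (by fun_prop : Continuous fun t : ℝ => (1 - t) * C).tendsto' 0 C (by simp)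
  linarith [le_of_tendsto hlim (mem_of_superset (Ioo_mem_nhdsGT zero_lt_one) hstep)]

theorem ConvexOn.finset_sum {E ι : Type*} [AddCommGroup E] [Module ℝ E] {s : Set E}
    (hs : Convex ℝ s) (t : Finset ι) {f : ι → E → ℝ} (hf : ∀ i ∈ t, ConvexOn ℝ s (f i)) :
    ConvexOn ℝ s fun x => ∑ i ∈ t, f i x := by
  classical
  induction t using Finset.induction_on with
  | empty => simpa using convexOn_const (0 : ℝ) hs
  | insert i t hi ih =>
    simp_rw [Finset.sum_insert hi]
    exact (hf i (mem_insert_self i t)).add (ih fun j hj => hf j (mem_insert_of_mem hj))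

theorem LipschitzWith.average {α ι : Type*} [PseudoMetricSpace α] [Fintype ι] {K : NNReal}
    {f : ι → α → ℝ} (hf : ∀ i, LipschitzWith K (f i)) :
    LipschitzWith K fun x => (1 / (Fintype.card ι : ℝ)) * ∑ i, f i x := by
  refine LipschitzWith.of_dist_le_mul fun x y => ?_
  have hcard : (1 / (Fintype.card ι : ℝ)) * Fintype.card ι ≤ 1 := by
    rcases eq_or_ne (Fintype.card ι : ℝ) 0 with h | h
    · simp [h]
    · rw [one_div_mul_cancel h]
  calc dist ((1 / (Fintype.card ι : ℝ)) * ∑ i, f i x) ((1 / (Fintype.card ι : ℝ)) * ∑ i, f i y)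
      = (1 / (Fintype.card ι : ℝ)) * |∑ i, (f i x - f i y)| := by
        rw [Real.dist_eq, ← mul_sub, ← Finset.sum_sub_distrib, abs_mul,
          abs_of_nonneg (by positivity)]
    _ ≤ (1 / (Fintype.card ι : ℝ)) * ∑ _i : ι, K * dist x y := by
        gcongr
        refine (Finset.abs_sum_le_sum_abs _ _).trans (Finset.sum_le_sum fun i _ => ?_)
        simpa [Real.dist_eq] using (hf i).dist_le_mul x y
    _ = (1 / (Fintype.card ι : ℝ)) * Fintype.card ι * (K * dist x y) := by
        rw [Finset.sum_const, Finset.card_univ, nsmul_eq_mul, mul_assoc]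
    _ ≤ K * dist x y := mul_le_of_le_one_left (by positivity) hcard

section Regularized

variable {E : Type*} [NormedAddCommGroup E] [InnerProductSpace ℝ E] {F : E → ℝ} {c c' : ℝ}
  {w w' : E}

/-- The paper's `O_λ` for `c = λ`, with `F` the averaged training loss. -/
noncomputable def regularizedObjective (c : ℝ) (F : E → ℝ) (v : E) : ℝ := c / 2 * ‖v‖ ^ 2 + F v

theorem ConvexOn.strongConvexOn_regularizedObjective {s : Set E} (hF : ConvexOn ℝ s F) :
    StrongConvexOn s c (regularizedObjective c F) :=
  strongConvexOn_iff_convex.2 <| by simpa only [regularizedObjective, add_sub_cancel_left] using hF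

theorem mul_norm_le_of_isMinOn_regularizedObjective {K : NNReal} (hF : ConvexOn ℝ univ F)
    (hK : LipschitzWith K F) (hw : IsMinOn (regularizedObjective c F) univ w) :
    c * ‖w‖ ≤ K := by
  have hgrowth := hF.strongConvexOn_regularizedObjective.add_le_of_isMinOn hw (mem_univ w)
    (mem_univ 0)
  have hlip : F 0 - F w ≤ K * ‖w‖ := by
    simpa [Real.dist_eq] using (le_abs_self _).trans (hK.dist_le_mul 0 w)
  simp only [regularizedObjective, zero_sub, norm_neg, norm_zero] at hgrowth
  rcases (norm_nonneg w).eq_or_lt with h | h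
  · rw [← h, mul_zero]; exact K.coe_nonneg
  · exact le_of_mul_le_mul_right (by linarith) h

theorem mul_norm_sub_le_of_isMinOn_regularizedObjective (hF : ConvexOn ℝ univ F) (hcc' : c ≤ c')
    (hw : IsMinOn (regularizedObjective c F) univ w)
    (hw' : IsMinOn (regularizedObjective c' F) univ w') :
    (c + c') * ‖w - w'‖ ≤ (c' - c) * (‖w‖ + ‖w'‖) := by
  have hgrowth := hF.strongConvexOn_regularizedObjective.add_le_of_isMinOn hw (mem_univ w)
    (mem_univ w')
  have hgrowth' := hF.strongConvexOn_regularizedObjective.add_le_of_isMinOn hw' (mem_univ w')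
    (mem_univ w)
  simp only [regularizedObjective, norm_sub_rev w' w] at hgrowth hgrowth'
  set s := ‖w - w'‖
  have hsq : (c + c') * s ^ 2 ≤ (c' - c) * ((‖w‖ + ‖w'‖) * (‖w‖ - ‖w'‖)) := by linarith
  have hdiff : (‖w‖ + ‖w'‖) * (‖w‖ - ‖w'‖) ≤ (‖w‖ + ‖w'‖) * s := by
    gcongr
    exact norm_sub_norm_le w w'
  rcases (show 0 ≤ s from norm_nonneg _).eq_or_lt with h | h
  · rw [← h, mul_zero]
    exact mul_nonneg (sub_nonneg.2 hcc') (by positivity)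
  · refine le_of_mul_le_mul_right ?_ h
    linarith [mul_le_mul_of_nonneg_left hdiff (sub_nonneg.2 hcc')]

theorem norm_sub_le_of_isMinOn_regularizedObjective {K : NNReal} (hF : ConvexOn ℝ univ F)
    (hK : LipschitzWith K F) (hc : 0 < c) (hcc' : c ≤ c')
    (hw : IsMinOn (regularizedObjective c F) univ w)
    (hw' : IsMinOn (regularizedObjective c' F) univ w') :
    ‖w - w'‖ ≤ K * (c' - c) / (c * c') := by
  have hc' : 0 < c' := hc.trans_le hcc'
  have hnorm := mul_norm_le_of_isMinOn_regularizedObjective hF hK hw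
  have hnorm' := mul_norm_le_of_isMinOn_regularizedObjective hF hK hw'
  have hsum : c * c' * (‖w‖ + ‖w'‖) ≤ K * (c + c') := by
    linarith [mul_le_mul_of_nonneg_left hnorm hc'.le, mul_le_mul_of_nonneg_left hnorm' hc.le]
  have hmain := mul_norm_sub_le_of_isMinOn_regularizedObjective hF hcc' hw hw'
  rw [le_div_iff₀ (mul_pos hc hc')]
  refine le_of_mul_le_mul_right ?_ (add_pos hc hc')
  linarith [mul_le_mul_of_nonneg_left hmain (mul_pos hc hc').le,
    mul_le_mul_of_nonneg_left hsum (sub_nonneg.2 hcc')]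

end Regularized

theorem validation_score_stability_general {d n m : ℕ} {X : Type*}
    (ℓ : Fin n → EuclideanSpace ℝ (Fin d) → ℝ)
    (hconv : ∀ i, ConvexOn ℝ Set.univ (ℓ i))
    (hlip : ∀ i, LipschitzWith 1 (ℓ i))
    (lam lam' : ℝ) (hlam : 0 < lam) (hlt : lam < lam')
    (w w' : EuclideanSpace ℝ (Fin d))
    (hw : IsMinOn (fun v => lam / 2 * ‖v‖ ^ 2 + (1 / (n : ℝ)) * ∑ i, ℓ i v) Set.univ w)
    (hw' : IsMinOn (fun v => lam' / 2 * ‖v‖ ^ 2 + (1 / (n : ℝ)) * ∑ i, ℓ i v) Set.univ w')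
    (g : EuclideanSpace ℝ (Fin d) → X → ℝ) (L : NNReal)
    (hg : ∀ x : X, LipschitzWith L (fun v => g v x))
    (val : Fin m → X) :
    |(-(1 / (m : ℝ)) * ∑ j, g w (val j)) - (-(1 / (m : ℝ)) * ∑ j, g w' (val j))|
      ≤ L * (lam' - lam) / (lam * lam') := by
  have htrain_conv : ConvexOn ℝ univ fun v => (1 / (n : ℝ)) * ∑ i, ℓ i v :=
    (ConvexOn.finset_sum convex_univ univ fun i _ => hconv i).smul (by positivity)
  have htrain_lip : LipschitzWith 1 fun v => (1 / (n : ℝ)) * ∑ i, ℓ i v := by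
    simpa only [Fintype.card_fin] using LipschitzWith.average hlip
  have hval_lip : LipschitzWith L fun v => (1 / (m : ℝ)) * ∑ j, g v (val j) := by
    simpa only [Fintype.card_fin] using LipschitzWith.average fun j => hg (val j)
  have hstab : ‖w - w'‖ ≤ 1 * (lam' - lam) / (lam * lam') :=
    norm_sub_le_of_isMinOn_regularizedObjective htrain_conv htrain_lip hlam hlt.le hw hw'
  calc |(-(1 / (m : ℝ)) * ∑ j, g w (val j)) - (-(1 / (m : ℝ)) * ∑ j, g w' (val j))|
      = dist ((1 / (m : ℝ)) * ∑ j, g w' (val j)) ((1 / (m : ℝ)) * ∑ j, g w (val j)) := by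
        rw [neg_mul, neg_mul, neg_sub_neg, Real.dist_eq]
    _ ≤ L * ‖w - w'‖ := by simpa [dist_eq_norm, norm_sub_rev w'] using hval_lip.dist_le_mul w' w
    _ ≤ L * (1 * (lam' - lam) / (lam * lam')) := by gcongr
    _ = L * (lam' - lam) / (lam * lam') := by ring

/-- Stability of the validation score under changing the regularization parameter: with
`w_λ, w_{λ'}` the regularized-ERM minimizers (convex, differentiable, `1`-Lipschitz
training losses), and the validation loss `g` being `L`-Lipschitz in `w`, the validation
score `f_V(w) = -(1/m) Σⱼ g(w, x̄ⱼ, ȳⱼ)` satisfies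
`|f_V(w_λ) - f_V(w_{λ'})| ≤ L (λ' - λ)/(λ λ')`. -/
theorem validation_score_stability {d n m : ℕ} {X : Type*} (hn : 0 < n) (hm : 0 < m)
    (ℓ : Fin n → EuclideanSpace ℝ (Fin d) → ℝ)
    (hconv : ∀ i, ConvexOn ℝ Set.univ (ℓ i))
    (hdiff : ∀ i, Differentiable ℝ (ℓ i))
    (hlip : ∀ i, LipschitzWith 1 (ℓ i))
    (lam lam' : ℝ) (hlam : 0 < lam) (hlt : lam < lam')
    (w w' : EuclideanSpace ℝ (Fin d))
    (hw : IsMinOn (fun v => lam / 2 * ‖v‖ ^ 2 + (1 / (n : ℝ)) * ∑ i, ℓ i v) Set.univ w)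
    (hw' : IsMinOn (fun v => lam' / 2 * ‖v‖ ^ 2 + (1 / (n : ℝ)) * ∑ i, ℓ i v) Set.univ w')
    (g : EuclideanSpace ℝ (Fin d) → X → ℝ) (L : NNReal)
    (hg : ∀ x : X, LipschitzWith L (fun v => g v x))
    (val : Fin m → X) :
    |(-(1 / (m : ℝ)) * ∑ j, g w (val j)) - (-(1 / (m : ℝ)) * ∑ j, g w' (val j))|
      ≤ L * (lam' - lam) / (lam * lam') :=
  validation_score_stability_general ℓ hconv hlip lam lam' hlam hlt w w' hw hw' g L hg val
end
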